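/- If Dyck paths P and Q of size n have the same type, then mir(P) and mir(Q) have the same type. Consequently, if [P, Q] is a synchronized interval in the Tamari lattice, then [mir(Q), mir(P)] is also a synchronized interval. -/

import Mathlib

/-!
Every nonempty Dyck path factors at its last return as `A u B d`, and
`mir (A u B d) = mir B u mir A d`; everything is proved by induction along this factorization.
The type of `A u B d` is the type of `A`, then `N` if `A ≠ ε` and `E` if `B ≠ ε`, then the
type of `B`. Hence `mir` reverses the type and swaps `N` and `E`, so it preserves equality of
types.

A move `V d D₁ W → V D₁ d W` with `D₁ = A₁ u B₁ d` is the move across `A₁` followed by the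
move across the primitive path `u B₁ d`. A primitive move in `A u B d` takes place inside `A`
or inside `B`, where induction applies, unless it is the root rotation
`(X u Y d) u Z d → X u (Y u Z d) d`, whose image under `mir` is a primitive move in the
opposite direction. So `mir` reverses the Tamari order.
-/

/-- A Dyck path: a word in `u = true`, `d = false` with equally many `u`'s and `d`'s,
every prefix of which has at least as many `u`'s as `d`'s. -/
def IsDyck (w : List Bool) : Prop :=
  w.count true = w.count false ∧ ∀ p, p <+: w → p.count false ≤ p.count true

/-- The number of non-initial contacts of a path: the number of nonempty balanced
prefixes. -/
def ncontacts (w : List Bool) : ℕ :=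
  ((List.range w.length).filter
    (fun j => (w.take (j + 1)).count true = (w.take (j + 1)).count false)).length

/-- The involution `mir` on Dyck paths, defined recursively by `mir ε = ε` and
`mir (D₁ u D₂ d) = mir D₂ u mir D₁ d`, where a nonempty Dyck path is uniquely
written `D₁ u D₂ d` with `D₁, D₂` Dyck paths and `D₂` starting right after the
last non-initial contact before the endpoint (so `D₁` is the longest proper
balanced prefix). -/
def mir (w : List Bool) : List Bool :=
  if hw : w = [] then []
  else
    let e := w.dropLast
    let j := ((List.range e.length).filter
      (fun j => (e.take j).count true = (e.take j).count false)).foldr max 0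
    mir (e.drop (j + 1)) ++ true :: (mir (e.take j) ++ [false])
termination_by w.length
decreasing_by
  all_goals
    have hp := List.length_pos_iff.mpr hw
    simp only [List.length_drop, List.length_take, List.length_dropLast]
    omega

/-- The Tamari covering relation: `D = V d D₁ W` covers `D' = V D₁ d W`, where `D₁`
is a nonempty Dyck path. `TCov D D'` means `D` covers `D'`. -/
inductive TCov : List Bool → List Bool → Prop where
  | mk (V W D1 : List Bool) (h : IsDyck D1) (hne : D1 ≠ []) :
      TCov (V ++ false :: (D1 ++ W)) (V ++ D1 ++ false :: W)

/-- The Tamari order: reflexive-transitive closure of the covering relation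
(`TamariLE D' D` holds when `D' ⪯ D`). -/
def TamariLE : List Bool → List Bool → Prop :=
  Relation.ReflTransGen (fun x y => TCov y x)

/-- For each up step (except one at the very last position), record whether it is
immediately followed by an up step. The type of a Dyck path of size `n` is the
first `n - 1` of these entries, i.e. `(dtype w).dropLast` (`true` codes `E`). -/
def dtype : List Bool → List Bool
  | [] => []
  | [_] => []
  | a :: b :: rest => if a then b :: dtype (b :: rest) else dtype (b :: rest)

/-- Two Dyck paths have the same type. -/
def TypeEq (P Q : List Bool) : Prop := (dtype P).dropLast = (dtype Q).dropLast

/-- A synchronized interval: a pair of nonempty Dyck paths of the same size, comparable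
in the Tamari order, with the same type. -/
def Synchronized (P Q : List Bool) : Prop :=
  IsDyck P ∧ IsDyck Q ∧ P ≠ [] ∧ P.count true = Q.count true ∧
    TamariLE P Q ∧ TypeEq P Q

lemma List.prefix_append_cases {α : Type*} {p A B : List α} (h : p <+: A ++ B) :
    p <+: A ∨ ∃ q, q <+: B ∧ p = A ++ q := by
  obtain ⟨r, hr⟩ := h
  rcases List.append_eq_append_iff.1 hr with ⟨s, rfl, -⟩ | ⟨q, rfl, rfl⟩
  · exact Or.inl (List.prefix_append p s)
  · exact Or.inr ⟨q, List.prefix_append q r, rfl⟩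

lemma List.append_singleton_eq_append_cons {α : Type*} {L X W : List α} {a b : α}
    (h : L ++ [a] = X ++ b :: W) :
    (W = [] ∧ L = X ∧ a = b) ∨ ∃ Z, W = Z ++ [a] ∧ L = X ++ b :: Z := by
  rcases List.eq_nil_or_concat W with rfl | ⟨Z, c, rfl⟩
  · obtain ⟨rfl, hab⟩ := List.append_inj' h rfl
    exact Or.inl ⟨rfl, rfl, by simpa using hab⟩
  · rw [List.concat_eq_append, ← List.cons_append, ← List.append_assoc] at h
    obtain ⟨rfl, hac⟩ := List.append_inj' h rfl
    exact Or.inr ⟨Z, by simpa using hac.symm, rfl⟩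

def height (w : List Bool) : ℤ := (w.count true : ℤ) - w.count false

@[simp] lemma height_nil : height [] = 0 := rfl

@[simp] lemma height_cons_true (l : List Bool) : height (true :: l) = height l + 1 := by
  simp [height, sub_add_eq_add_sub]

@[simp] lemma height_cons_false (l : List Bool) : height (false :: l) = height l - 1 := by
  simp [height, sub_sub]

@[simp] lemma height_append (a b : List Bool) : height (a ++ b) = height a + height b := by
  simp only [height, List.count_append]; push_cast; ring

lemma isDyck_iff {w : List Bool} :
    IsDyck w ↔ height w = 0 ∧ ∀ p, p <+: w → 0 ≤ height p := by
  simp only [IsDyck, height, sub_eq_zero, sub_nonneg, Nat.cast_inj, Nat.cast_le]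

namespace IsDyck

variable {w : List Bool}

lemma height_eq (h : IsDyck w) : height w = 0 := (isDyck_iff.1 h).1

lemma height_nonneg (h : IsDyck w) {p : List Bool} (hp : p <+: w) : 0 ≤ height p :=
  (isDyck_iff.1 h).2 p hp

lemma nil : IsDyck [] := isDyck_iff.2 ⟨rfl, fun p hp => by simp [List.prefix_nil.1 hp]⟩

lemma of_prefix (h : IsDyck w) {p : List Bool} (hp : p <+: w) (hp0 : height p = 0) :
    IsDyck p :=
  isDyck_iff.2 ⟨hp0, fun _ hq => h.height_nonneg (hq.trans hp)⟩

lemma node {A B : List Bool} (hA : IsDyck A) (hB : IsDyck B) :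
    IsDyck (A ++ true :: (B ++ [false])) := by
  refine isDyck_iff.2 ⟨by simp [hA.height_eq, hB.height_eq], fun p hp => ?_⟩
  rcases List.prefix_append_cases hp with hpA | ⟨q, hq, rfl⟩
  · exact hA.height_nonneg hpA
  rcases List.prefix_cons_iff.1 hq with rfl | ⟨t, rfl, ht⟩
  · simp [hA.height_eq]
  rcases List.prefix_concat_iff.1 ht with rfl | htB
  · simp [hA.height_eq, hB.height_eq]
  · have := hB.height_nonneg htB
    simp only [height_append, height_cons_true, hA.height_eq]
    omega

lemma slide {V X W : List Bool} (h : IsDyck (V ++ false :: (X ++ W))) (hX : IsDyck X) :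
    IsDyck (V ++ X ++ false :: W) := by
  have hV : 1 ≤ height V := by
    have := h.height_nonneg (p := V ++ [false]) ⟨X ++ W, by simp⟩
    simp only [height_append, height_cons_false, height_nil] at this
    omega
  have hD := h.height_eq
  simp only [height_append, height_cons_false] at hD
  refine isDyck_iff.2 ⟨by simp only [height_append, height_cons_false]; omega, fun p hp => ?_⟩
  rcases List.prefix_append_cases hp with hpVX | ⟨q, hq, rfl⟩
  · rcases List.prefix_append_cases hpVX with hpV | ⟨r, hr, rfl⟩
    · exact h.height_nonneg (hpV.trans (List.prefix_append _ _))
    · have := hX.height_nonneg hr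
      simp only [height_append]
      omega
  rcases List.prefix_cons_iff.1 hq with rfl | ⟨r, rfl, hr⟩
  · simp only [height_append, height_nil, hX.height_eq]
    omega
  · obtain ⟨s, rfl⟩ := hr
    have := h.height_nonneg (p := V ++ false :: (X ++ r)) ⟨s, by simp⟩
    simp only [height_append, height_cons_false, List.append_assoc] at this ⊢
    omega

lemma not_append_false_prefix {B X : List Bool} (hB : IsDyck B) (hX : height X = 0) :
    ¬ X ++ [false] <+: B := fun hp => by
  have := hB.height_nonneg hp
  simp [hX] at this

end IsDyck

def lastReturn (e : List Bool) : ℕ :=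
  ((List.range e.length).filter
    (fun j => (e.take j).count true = (e.take j).count false)).foldr max 0

lemma mir_concat_false (e : List Bool) :
    mir (e ++ [false]) =
      mir (e.drop (lastReturn e + 1)) ++ true :: (mir (e.take (lastReturn e)) ++ [false]) := by
  rw [mir]
  simp [lastReturn]

lemma mir_ne_nil {w : List Bool} (hw : w ≠ []) : mir w ≠ [] := by
  rw [mir]
  simp [hw]

lemma mem_filter_balanced_iff {e : List Bool} {j : ℕ} :
    j ∈ (List.range e.length).filter
      (fun j => (e.take j).count true = (e.take j).count false) ↔
      j < e.length ∧ height (e.take j) = 0 := by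
  simp [height, sub_eq_zero]

lemma le_lastReturn {e p : List Bool} (hp : p <+: e) (hlt : p.length < e.length)
    (h0 : height p = 0) : p.length ≤ lastReturn e := by
  rw [List.prefix_iff_eq_take.1 hp] at h0
  exact List.le_max_of_le (mem_filter_balanced_iff.2 ⟨hlt, h0⟩) le_rfl

lemma lastReturn_le {e : List Bool} {j : ℕ}
    (h : ∀ p, p <+: e → p.length < e.length → height p = 0 → p.length ≤ j) :
    lastReturn e ≤ j := by
  refine List.max_le_of_forall_le _ _ fun i hi => ?_
  obtain ⟨hi, h0⟩ := mem_filter_balanced_iff.1 hi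
  simpa [hi.le] using h _ (List.take_prefix i e) (by simpa [hi.le]) h0

lemma lastReturn_spec {e : List Bool} (he : e ≠ []) :
    lastReturn e < e.length ∧ height (e.take (lastReturn e)) = 0 := by
  refine mem_filter_balanced_iff.1 (List.maximum_mem ?_)
  rw [← List.foldr_max_of_ne_nil]
  · rfl
  · exact List.ne_nil_of_mem (mem_filter_balanced_iff.2 ⟨List.length_pos_iff.2 he, by simp⟩)

lemma lastReturn_node {A B : List Bool} (hA : IsDyck A) (hB : IsDyck B) :
    lastReturn (A ++ true :: B) = A.length := by
  refine le_antisymm (lastReturn_le fun p hp _ h0 => ?_)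
    (le_lastReturn (List.prefix_append _ _) (by simp) hA.height_eq)
  rcases List.prefix_append_cases hp with hpA | ⟨q, hq, rfl⟩
  · exact hpA.length_le
  rcases List.prefix_cons_iff.1 hq with rfl | ⟨r, rfl, hr⟩
  · simp
  · have := hB.height_nonneg hr
    simp only [height_append, height_cons_true, hA.height_eq] at h0
    omega

lemma mir_node {A B : List Bool} (hA : IsDyck A) (hB : IsDyck B) :
    mir (A ++ true :: (B ++ [false])) = mir B ++ true :: (mir A ++ [false]) := by
  have h := mir_concat_false (A ++ true :: B)
  rw [lastReturn_node hA hB] at h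
  simpa [List.drop_append, List.take_append, List.drop_eq_nil_of_le (Nat.le_succ A.length)] using h

lemma IsDyck.exists_eq_concat_false {w : List Bool} (hw : IsDyck w) (hne : w ≠ []) :
    ∃ e, w = e ++ [false] ∧ height e = 1 := by
  obtain ⟨e, b, rfl⟩ := (List.eq_nil_or_concat w).resolve_left hne
  rw [List.concat_eq_append] at hw ⊢
  have h0 := hw.height_eq
  have he := hw.height_nonneg (List.prefix_append e [b])
  cases b
  · simp only [height_append, height_cons_false, height_nil] at h0
    exact ⟨e, rfl, by omega⟩
  · simp only [height_append, height_cons_true, height_nil] at h0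
    omega

lemma IsDyck.exists_node {w : List Bool} (hw : IsDyck w) (hne : w ≠ []) :
    ∃ A B, IsDyck A ∧ IsDyck B ∧ w = A ++ true :: (B ++ [false]) := by
  obtain ⟨e, rfl, he1⟩ := hw.exists_eq_concat_false hne
  obtain ⟨hj, hA0⟩ := lastReturn_spec (e := e) (by rintro rfl; simp at he1)
  set A := e.take (lastReturn e)
  have hA : IsDyck A := hw.of_prefix ((List.take_prefix _ _).trans (List.prefix_append _ _)) hA0
  obtain ⟨c, B, hcB⟩ := List.exists_cons_of_ne_nil (l := e.drop (lastReturn e)) (by simpa)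
  have he : e = A ++ c :: B := by rw [← hcB, List.take_append_drop]
  have hc : c = true := by
    have := hw.height_nonneg (p := A ++ [c]) ⟨B ++ [false], by simp [he]⟩
    cases c <;> simp_all
  subst hc
  have hB0 : height B = 0 := by
    simp only [he, height_append, height_cons_true, hA0] at he1
    omega
  refine ⟨A, B, hA, isDyck_iff.2 ⟨hB0, fun p hp => ?_⟩, by simp [he]⟩
  -- a prefix of `B` of negative height would yield a return of `e` later than `lastReturn e`
  by_contra! hneg
  have hpw := hw.height_nonneg (p := A ++ true :: p)
    (by simpa [he] using hp.trans (List.prefix_append B [false]))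
  have hp1 : height p = -1 := by
    simp only [height_append, height_cons_true, hA0] at hpw
    omega
  have hlt : p.length < B.length :=
    lt_of_le_of_ne hp.length_le fun hl => by simp [hp.eq_of_length hl, hB0] at hp1
  have hAp : A ++ true :: p <+: e := by simpa [he] using hp
  have := le_lastReturn hAp (by simpa [he] using hlt) (by simp [hA0, hp1])
  simp [A, hj.le] at this

@[elab_as_elim]
theorem IsDyck.induction {motive : (w : List Bool) → IsDyck w → Prop}
    (nil : motive [] IsDyck.nil)
    (node : ∀ A B (hA : IsDyck A) (hB : IsDyck B), motive A hA → motive B hB →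
      motive (A ++ true :: (B ++ [false])) (hA.node hB))
    {w : List Bool} (hw : IsDyck w) : motive w hw := by
  induction hlen : w.length using Nat.strong_induction_on generalizing w with
  | _ n ih =>
    rcases eq_or_ne w [] with rfl | hne
    · exact nil
    obtain ⟨A, B, hA, hB, rfl⟩ := hw.exists_node hne
    simp only [List.length_append, List.length_cons] at hlen
    exact node A B hA hB (ih _ (by omega) hA rfl) (ih _ (by omega) hB rfl)

@[simp] lemma mir_nil : mir [] = [] := by
  rw [mir]; rfl

lemma mir_eq_nil_iff {w : List Bool} : mir w = [] ↔ w = [] :=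
  ⟨not_imp_not.1 mir_ne_nil, fun h => h ▸ mir_nil⟩

lemma IsDyck.mir {w : List Bool} (hw : IsDyck w) : IsDyck (mir w) := by
  induction hw using IsDyck.induction with
  | nil => simpa using IsDyck.nil
  | node A B hA hB ihA ihB => rw [mir_node hA hB]; exact ihB.node ihA

lemma count_mir {w : List Bool} (hw : IsDyck w) (b : Bool) : (mir w).count b = w.count b := by
  induction hw using IsDyck.induction with
  | nil => simp
  | node A B hA hB ihA ihB =>
    rw [mir_node hA hB]
    simp only [List.count_append, List.count_cons, ihA, ihB]
    omega

-- `TypeEq P Q` is definitionally `dyckType P = dyckType Q`.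
def dyckType (w : List Bool) : List Bool := (dtype w).dropLast

@[simp] lemma dyckType_nil : dyckType [] = [] := rfl

lemma dtype_append_false_cons (e Y : List Bool) :
    dtype (e ++ false :: Y) = dtype (e ++ [false]) ++ dtype Y := by
  induction e with
  | nil => cases Y <;> simp [dtype]
  | cons a e ih =>
    cases e with
    | nil => cases a <;> cases Y <;> simp [dtype]
    | cons b e => cases a <;> simpa [dtype] using ih

lemma IsDyck.dtype_append {X : List Bool} (hX : IsDyck X) (Y : List Bool) :
    dtype (X ++ Y) = dtype X ++ dtype Y := by
  rcases eq_or_ne X [] with rfl | hne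
  · simp [dtype]
  obtain ⟨A, B, -, -, rfl⟩ := hX.exists_node hne
  simpa using dtype_append_false_cons (A ++ true :: B) Y

lemma dtype_node {A B : List Bool} (hA : IsDyck A) (hB : IsDyck B) :
    dtype (A ++ true :: (B ++ [false])) = dtype A ++ decide (B ≠ []) :: dtype B := by
  rw [hA.dtype_append]
  congr 1
  rcases eq_or_ne B [] with rfl | hne
  · simp [dtype]
  obtain ⟨r, rfl⟩ : ∃ r, B = true :: r := by
    obtain ⟨b, r, rfl⟩ := List.exists_cons_of_ne_nil hne
    have := hB.height_nonneg (p := [b]) (by simp)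
    cases b <;> simp_all
  simpa [dtype] using hB.dtype_append [false]

lemma IsDyck.dtype_eq {w : List Bool} (hw : IsDyck w) (hne : w ≠ []) :
    dtype w = dyckType w ++ [false] := by
  suffices ∃ g, dtype w = g ++ [false] by
    obtain ⟨g, hg⟩ := this
    simp [dyckType, hg]
  induction hw using IsDyck.induction with
  | nil => simp at hne
  | node A B hA hB _ ihB =>
    rw [dtype_node hA hB]
    rcases eq_or_ne B [] with rfl | hB0
    · exact ⟨dtype A, by simp [dtype]⟩
    · obtain ⟨g, hg⟩ := ihB hB0
      exact ⟨dtype A ++ true :: g, by simp [hg, hB0]⟩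

lemma dyckType_node {A B : List Bool} (hA : IsDyck A) (hB : IsDyck B) :
    dyckType (A ++ true :: (B ++ [false])) =
      dyckType A ++ (if A = [] then [] else [false]) ++ (if B = [] then [] else [true]) ++
        dyckType B := by
  rw [dyckType, dtype_node hA hB]
  rcases eq_or_ne A [] with rfl | hA0 <;> rcases eq_or_ne B [] with rfl | hB0
  · rfl
  · simp [dtype, hB.dtype_eq hB0, hB0, List.dropLast_cons_of_ne_nil]
  · simp [dtype, hA.dtype_eq hA0, hA0]
  · simp [hA.dtype_eq hA0, hB.dtype_eq hB0, hA0, hB0, List.dropLast_cons_of_ne_nil]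

lemma dyckType_mir {w : List Bool} (hw : IsDyck w) :
    dyckType (mir w) = ((dyckType w).reverse).map not := by
  induction hw using IsDyck.induction with
  | nil => simp
  | node A B hA hB ihA ihB =>
    rw [mir_node hA hB, dyckType_node hB.mir hA.mir, dyckType_node hA hB, ihA, ihB]
    rcases eq_or_ne A [] with rfl | hA0 <;> rcases eq_or_ne B [] with rfl | hB0 <;>
      simp [mir_eq_nil_iff, *]

lemma TCov.isDyck {D D' : List Bool} (h : TCov D D') (hD : IsDyck D) : IsDyck D' := by
  obtain ⟨V, W, D1, hD1, -⟩ := h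
  exact hD.slide hD1

lemma TCov.length_eq {D D' : List Bool} (h : TCov D D') : D.length = D'.length := by
  obtain ⟨V, W, D1, -, -⟩ := h
  simp only [List.length_append, List.length_cons]
  omega

lemma TamariLE.length_eq {P Q : List Bool} (h : TamariLE P Q) : P.length = Q.length := by
  induction h with
  | refl => rfl
  | tail _ hcov ih => exact ih.trans hcov.length_eq.symm

lemma TCov.append_left {X Y : List Bool} (C : List Bool) (h : TCov X Y) :
    TCov (C ++ X) (C ++ Y) := by
  obtain ⟨V, W, D1, hD1, hne⟩ := h
  simpa using TCov.mk (C ++ V) W D1 hD1 hne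

lemma TCov.append_right {X Y : List Bool} (E : List Bool) (h : TCov X Y) :
    TCov (X ++ E) (Y ++ E) := by
  obtain ⟨V, W, D1, hD1, hne⟩ := h
  simpa using TCov.mk V (W ++ E) D1 hD1 hne

lemma eq_nil_of_prefix_true_cons {B1 S : List Bool} (hB1 : IsDyck B1) (hS : S <+: true :: B1)
    (h0 : height S = 0) : S = [] := by
  rcases List.prefix_cons_iff.1 hS with rfl | ⟨t, rfl, ht⟩
  · rfl
  · have := hB1.height_nonneg ht
    rw [height_cons_true] at h0
    omega

lemma slide_in_node_right {B T W B1 : List Bool} (hB : IsDyck B) (hB1 : IsDyck B1)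
    (h : B ++ [false] = T ++ false :: (true :: (B1 ++ [false]) ++ W)) :
    ∃ Z, B = T ++ false :: (true :: (B1 ++ [false]) ++ Z) ∧ W = Z ++ [false] := by
  rw [show T ++ false :: (true :: (B1 ++ [false]) ++ W) =
    (T ++ false :: true :: B1) ++ false :: W by simp] at h
  rcases List.append_singleton_eq_append_cons h with ⟨rfl, rfl, -⟩ | ⟨Z, rfl, rfl⟩
  · have hT : height T = 0 := by simpa [hB1.height_eq] using hB.height_eq
    exact absurd ⟨true :: B1, by simp⟩ (hB.not_append_false_prefix hT)
  · exact ⟨Z, by simp, rfl⟩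

lemma slide_in_node_left {V S B B1 W : List Bool} (hA : IsDyck (V ++ false :: S))
    (hB : IsDyck B) (hB1 : IsDyck B1)
    (h : true :: (B1 ++ [false]) ++ W = S ++ true :: (B ++ [false])) :
    (∃ U, S = true :: (B1 ++ [false]) ++ U ∧ W = U ++ true :: (B ++ [false])) ∨
      (S = [] ∧ B = B1 ∧ W = []) := by
  rcases List.append_eq_append_iff.1 h with ⟨U, rfl, hW⟩ | ⟨C, hE, hC⟩
  · exact Or.inl ⟨U, rfl, hW⟩
  have hS0 : height S = 0 := by
    have h1 := (IsDyck.nil.node hB1).height_nonneg (p := S) ⟨C, by simpa using hE.symm⟩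
    have h2 := hA.height_nonneg (p := V ++ [false]) ⟨S, by simp⟩
    have h3 := hA.height_eq
    simp only [height_append, height_cons_false, height_nil] at h2 h3
    omega
  rcases List.prefix_concat_iff.1 (⟨C, hE.symm⟩ : S <+: (true :: B1) ++ [false]) with hSE | hS
  · subst hSE
    obtain rfl : C = [] := by simpa using hE
    exact Or.inl ⟨[], by simp, by simpa using hC.symm⟩
  obtain rfl := eq_nil_of_prefix_true_cons hB1 hS hS0
  obtain rfl : C = true :: (B1 ++ [false]) := by simpa using hE.symm
  simp only [List.cons_append, List.cons.injEq, true_and, List.append_assoc,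
    List.nil_append] at hC
  rcases List.append_singleton_eq_append_cons hC with ⟨rfl, rfl, -⟩ | ⟨Z, rfl, rfl⟩
  · exact Or.inr ⟨rfl, rfl, rfl⟩
  · exact absurd ⟨Z, by simp⟩ (hB.not_append_false_prefix hB1.height_eq)

lemma tcov_mir_rotate {X Y Z : List Bool} (hX : IsDyck X) (hY : IsDyck Y) (hZ : IsDyck Z) :
    TCov (mir (X ++ true :: ((Y ++ true :: (Z ++ [false])) ++ [false])))
      (mir ((X ++ true :: (Y ++ [false])) ++ true :: (Z ++ [false]))) := by
  rw [mir_node hX (hY.node hZ), mir_node hY hZ, mir_node (hX.node hY) hZ, mir_node hX hY]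
  simpa using TCov.mk (mir Z ++ true :: mir Y) [] (true :: (mir X ++ [false]))
    (by simpa using IsDyck.nil.node hX.mir) (by simp)

lemma tcov_mir_of_slide_primitive {B1 : List Bool} (hB1 : IsDyck B1) {D : List Bool}
    (hD : IsDyck D) : ∀ V W, D = V ++ false :: (true :: (B1 ++ [false]) ++ W) →
      TCov (mir (V ++ true :: (B1 ++ [false]) ++ false :: W)) (mir D) := by
  have hE : IsDyck (true :: (B1 ++ [false])) := by simpa using IsDyck.nil.node hB1
  induction hD using IsDyck.induction with
  | nil => intro V W h; simp at h
  | node A B hA hB ihA ihB =>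
    intro V W h
    rw [mir_node hA hB]
    rcases List.append_eq_append_iff.1 h with ⟨R, rfl, hR⟩ | ⟨R, rfl, hR⟩
    · obtain ⟨T, rfl⟩ : ∃ T, R = true :: T := by
        cases R <;> simp_all
      simp only [List.cons_append, List.cons.injEq, true_and] at hR
      obtain ⟨Z, rfl, rfl⟩ := slide_in_node_right hB hB1 hR
      have := (ihB T Z rfl).append_right (true :: (mir A ++ [false]))
      rw [← mir_node hA (hB.slide hE)] at this
      simpa using this
    · obtain ⟨S, rfl⟩ : ∃ S, R = false :: S := by
        cases R <;> simp_all
      simp only [List.cons_append, List.cons.injEq, true_and] at hR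
      rcases slide_in_node_left hA hB hB1 hR with ⟨U, rfl, rfl⟩ | ⟨rfl, rfl, rfl⟩
      · have := ((ihA V U rfl).append_right [false]).append_left (mir B ++ [true])
        rw [show V ++ true :: (B1 ++ [false]) ++ false :: (U ++ true :: (B ++ [false])) =
          (V ++ true :: (B1 ++ [false]) ++ false :: U) ++ true :: (B ++ [false]) by simp,
          mir_node (hA.slide hE) hB]
        simpa using this
      · -- the slid `d` ends `A` and `u B₁ d` is all of `u B d`: a rotation at the root
        obtain ⟨X, Y, hX, hY, hXY⟩ := hA.exists_node (by simp)
        obtain rfl : V = X ++ true :: Y := by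
          simpa [List.dropLast_cons_of_ne_nil] using congrArg List.dropLast hXY
        rw [← mir_node hA hB]
        simpa using tcov_mir_rotate hX hY hB

lemma tamariLE_mir_of_slide {D1 : List Bool} (hD1 : IsDyck D1) :
    ∀ V W, IsDyck (V ++ false :: (D1 ++ W)) →
      TamariLE (mir (V ++ false :: (D1 ++ W))) (mir (V ++ D1 ++ false :: W)) := by
  induction hD1 using IsDyck.induction with
  | nil =>
    intro V W _
    simp only [List.nil_append, List.append_nil]
    exact Relation.ReflTransGen.refl
  | node A1 B1 hA1 hB1 ihA1 _ =>
    intro V W hD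
    have hD' : IsDyck (V ++ false :: (A1 ++ (true :: (B1 ++ [false]) ++ W))) := by simpa using hD
    have past_A1 := ihA1 V _ hD'
    have past_B1 := tcov_mir_of_slide_primitive hB1 (hD'.slide hA1) (V ++ A1) W (by simp)
    unfold TamariLE at past_A1 ⊢
    simpa using past_A1.tail past_B1

lemma TCov.tamariLE_mir {D D' : List Bool} (h : TCov D D') (hD : IsDyck D) :
    TamariLE (mir D) (mir D') := by
  obtain ⟨V, W, D1, hD1, -⟩ := h
  exact tamariLE_mir_of_slide hD1 V W hD

lemma TamariLE.mir {P Q : List Bool} (h : TamariLE P Q) (hQ : IsDyck Q) :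
    TamariLE (mir Q) (mir P) := by
  induction h with
  | refl => exact Relation.ReflTransGen.refl
  | tail _ hcov ih => exact (hcov.tamariLE_mir hQ).trans (ih (hcov.isDyck hQ))

lemma TypeEq.mir {P Q : List Bool} (hP : IsDyck P) (hQ : IsDyck Q) (h : TypeEq P Q) :
    TypeEq (mir P) (mir Q) :=
  (dyckType_mir hP).trans ((congrArg (fun t => t.reverse.map not) h).trans (dyckType_mir hQ).symm)

theorem stmt11_general (P Q : List Bool) (hP : IsDyck P) (hQ : IsDyck Q) :
    (TypeEq P Q → TypeEq (mir P) (mir Q)) ∧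
    (Synchronized P Q → Synchronized (mir Q) (mir P)) := by
  refine ⟨TypeEq.mir hP hQ, ?_⟩
  rintro ⟨-, -, hP0, hcount, hPQ, hT⟩
  have hQ0 : Q ≠ [] := fun h =>
    hP0 (List.eq_nil_of_length_eq_zero (by simpa [h] using hPQ.length_eq))
  exact ⟨hQ.mir, hP.mir, mir_ne_nil hQ0, by rw [count_mir hQ, count_mir hP, hcount],
    hPQ.mir hQ, TypeEq.mir hQ hP hT.symm⟩

theorem stmt11 (P Q : List Bool) (hP : IsDyck P) (hQ : IsDyck Q)
    (hsize : P.count true = Q.count true) :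
    (TypeEq P Q → TypeEq (mir P) (mir Q)) ∧
    (Synchronized P Q → Synchronized (mir Q) (mir P)) :=
  stmt11_general P Q hP hQ
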